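/- arXiv:2008.03091 — 3 statements merged into one kernel-verified Lean document; each statement's English description precedes it below -/
import Mathlib

section
/- Let G be an n-node finite connected graph of diameter D that admits tree-restricted c-congestion b-block partial shortcuts. Then G admits tree-restricted (c·⌈log₂ n⌉)-congestion b-block (full) shortcuts: for every rooted spanning tree T of depth at most D and every collection of parts, there is a T-restricted shortcut for all parts with congestion at most c·⌈log₂ n⌉ and block number at most b. -/
open SimpleGraph

/-- The graph `(P ∪ V(H), H)`, as a subgraph of `G`: vertex set `P ∪ V(H)` and only the
edges of `H`. Its connected components are the blocks of the part `P`. -/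
def blocksGraph {V : Type} (G : SimpleGraph V) (P : Set V) (H : G.Subgraph) : G.Subgraph :=
  (⊥ : G.Subgraph).induce P ⊔ H

/-- `G` admits tree-restricted `c`-congestion `b`-block partial shortcuts (`D` bounds the
depth of the spanning trees considered): for every rooted spanning tree `T` of depth at most
`D` and every collection of parts `P 0, ..., P (k-1)`, at least `k/2` of the parts can be
assigned `T`-restricted shortcut subgraphs with congestion at most `c` and block number at
most `b`. -/
def AdmitsPartialShortcuts {V : Type} [Fintype V] (G : SimpleGraph V) (D c b : ℕ) : Prop :=
  ∀ (T : SimpleGraph V), T ≤ G → T.IsTree →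
    ∀ root : V, (∀ v : V, T.dist root v ≤ D) →
      ∀ (k : ℕ) (P : Fin k → Set V),
        (Pairwise fun i j => Disjoint (P i) (P j)) →
        (∀ i, (G.induce (P i)).Connected) →
        ∃ (I : Finset (Fin k)) (H : Fin k → G.Subgraph),
          k ≤ 2 * I.card ∧
          (∀ i ∈ I, (H i).edgeSet ⊆ T.edgeSet) ∧
          (∀ e : Sym2 V, {i : Fin k | i ∈ I ∧ e ∈ (H i).edgeSet}.ncard ≤ c) ∧
          (∀ i ∈ I, Nat.card (blocksGraph G (P i) (H i)).coe.ConnectedComponent ≤ b)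

/-- `G` admits tree-restricted `c`-congestion `b`-block (full) shortcuts (`D` bounds the
depth of the spanning trees considered): for every rooted spanning tree `T` of depth at most
`D` and every collection of parts, there is a `T`-restricted shortcut for all parts with
congestion at most `c` and block number at most `b`. -/
def AdmitsShortcuts {V : Type} [Fintype V] (G : SimpleGraph V) (D c b : ℕ) : Prop :=
  ∀ (T : SimpleGraph V), T ≤ G → T.IsTree →
    ∀ root : V, (∀ v : V, T.dist root v ≤ D) →
      ∀ (k : ℕ) (P : Fin k → Set V),
        (Pairwise fun i j => Disjoint (P i) (P j)) →
        (∀ i, (G.induce (P i)).Connected) →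
        ∃ H : Fin k → G.Subgraph,
          (∀ i, (H i).edgeSet ⊆ T.edgeSet) ∧
          (∀ e : Sym2 V, {i : Fin k | e ∈ (H i).edgeSet}.ncard ≤ c) ∧
          (∀ i, Nat.card (blocksGraph G (P i) (H i)).coe.ConnectedComponent ≤ b)

lemma aux_halving {V : Type} [Fintype V] (G : SimpleGraph V) (D c b : ℕ)
    (hpartial : AdmitsPartialShortcuts G D c b)
    (T : SimpleGraph V) (hTG : T ≤ G) (hTt : T.IsTree) (root : V)
    (hroot : ∀ v : V, T.dist root v ≤ D) :
    ∀ (t k : ℕ) (P : Fin k → Set V), k < 2 ^ t →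
      (Pairwise fun i j => Disjoint (P i) (P j)) →
      (∀ i, (G.induce (P i)).Connected) →
      ∃ H : Fin k → G.Subgraph,
        (∀ i, (H i).edgeSet ⊆ T.edgeSet) ∧
        (∀ e : Sym2 V, {i : Fin k | e ∈ (H i).edgeSet}.ncard ≤ c * t) ∧
        (∀ i, Nat.card (blocksGraph G (P i) (H i)).coe.ConnectedComponent ≤ b) := by
  intro t
  induction t with
  | zero =>
    intro k P hk _ _
    interval_cases k
    refine ⟨fun i => ⊥, fun i => i.elim0, ?_, fun i => i.elim0⟩
    intro e
    have : {i : Fin 0 | e ∈ ((⊥ : G.Subgraph)).edgeSet} = ∅ := Set.eq_empty_of_isEmpty _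
    simp [this]
  | succ t ih =>
    intro k P hk hdisj hconn
    obtain ⟨I, H₀, hI, hIe, hIc, hIb⟩ := hpartial T hTG hTt root hroot k P hdisj hconn
    have hφ := (Iᶜ : Finset (Fin k)).equivFin
    set m := (Iᶜ : Finset (Fin k)).card with hm
    let φ : Fin m ≃ {x // x ∈ (Iᶜ : Finset (Fin k))} := hφ.symm
    have hmlt : m < 2 ^ t := by
      have h1 : m = k - I.card := by
        rw [hm, Finset.card_compl, Fintype.card_fin]
      have h2 : (2 : ℕ) ^ (t + 1) = 2 * 2 ^ t := by ring
      omega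
    have hinj : Function.Injective (fun j : Fin m => ((φ j : {x // x ∈ (Iᶜ : Finset (Fin k))}) : Fin k)) :=
      Subtype.val_injective.comp φ.injective
    obtain ⟨H₁, h1e, h1c, h1b⟩ := ih m (fun j => P (φ j)) hmlt
      (fun i j hij => hdisj (hinj.ne hij)) (fun j => hconn _)
    refine ⟨fun i => if h : i ∈ I then H₀ i else H₁ (φ.symm ⟨i, Finset.mem_compl.mpr h⟩), ?_, ?_, ?_⟩
    · intro i e he
      by_cases h : i ∈ I
      · simp only [dif_pos h] at he; exact hIe i h he
      · simp only [dif_neg h] at he; exact h1e _ he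
    · intro e
      have hsub : {i : Fin k | e ∈ ((if h : i ∈ I then H₀ i else H₁ (φ.symm ⟨i, Finset.mem_compl.mpr h⟩)) : G.Subgraph).edgeSet}
          ⊆ {i : Fin k | i ∈ I ∧ e ∈ (H₀ i).edgeSet}
            ∪ (fun j : Fin m => ((φ j : {x // x ∈ (Iᶜ : Finset (Fin k))}) : Fin k)) ''
              {j : Fin m | e ∈ (H₁ j).edgeSet} := by
        intro i hi
        by_cases h : i ∈ I
        · left
          refine ⟨h, ?_⟩
          simpa [dif_pos h] using hi
        · right
          refine ⟨φ.symm ⟨i, Finset.mem_compl.mpr h⟩, ?_, ?_⟩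
          · simpa [dif_neg h] using hi
          · simp
      calc {i : Fin k | e ∈ ((if h : i ∈ I then H₀ i else H₁ (φ.symm ⟨i, Finset.mem_compl.mpr h⟩)) : G.Subgraph).edgeSet}.ncard
          ≤ _ := Set.ncard_le_ncard hsub (Set.toFinite _)
        _ ≤ {i : Fin k | i ∈ I ∧ e ∈ (H₀ i).edgeSet}.ncard
            + ((fun j : Fin m => ((φ j : {x // x ∈ (Iᶜ : Finset (Fin k))}) : Fin k)) ''
              {j : Fin m | e ∈ (H₁ j).edgeSet}).ncard := Set.ncard_union_le _ _
        _ ≤ c + c * t := by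
            gcongr
            · exact hIc e
            · rw [Set.ncard_image_of_injective _ hinj]; exact h1c e
        _ ≤ c * (t + 1) := by ring_nf; omega
    · intro i
      by_cases h : i ∈ I
      · beta_reduce
        rw [dif_pos h]
        exact hIb i h
      · beta_reduce
        rw [dif_neg h]
        have := h1b (φ.symm ⟨i, Finset.mem_compl.mpr h⟩)
        have key : ((φ (φ.symm ⟨i, Finset.mem_compl.mpr h⟩) :
            {x // x ∈ (Iᶜ : Finset (Fin k))}) : Fin k) = i := by
          rw [Equiv.apply_symm_apply]
        rw [key] at this
        exact this

/-- **Observation.** Let `G` be an `n`-node finite connected graph of diameter `D` that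
admits tree-restricted `c`-congestion `b`-block partial shortcuts. Then `G` admits
tree-restricted `(c·⌈log₂ n⌉)`-congestion `b`-block (full) shortcuts. -/
theorem admitsShortcuts_of_admitsPartialShortcuts
    {V : Type} [Fintype V] (G : SimpleGraph V) (hG : G.Connected)
    (D : ℕ) (hD : ∀ u v : V, G.dist u v ≤ D) (c b : ℕ)
    (hpartial : AdmitsPartialShortcuts G D c b) :
    AdmitsShortcuts G D (c * Nat.clog 2 (Fintype.card V)) b := by
  intro T hTG hTt root hroot k P hdisj hconn
  have hV : Nonempty V := hG.nonempty
  have hn : 0 < Fintype.card V := Fintype.card_pos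
  by_cases hk : k < 2 ^ Nat.clog 2 (Fintype.card V)
  · exact aux_halving G D c b hpartial T hTG hTt root hroot _ k P hk hdisj hconn
  · -- k ≥ 2^clog ≥ n, so all parts are singletons
    have hnk : Fintype.card V ≤ k :=
      (Nat.le_pow_clog one_lt_two _).trans (le_of_not_gt hk)
    have hne : ∀ i, (P i).Nonempty := by
      intro i
      have := (hconn i).nonempty
      exact Set.nonempty_coe_sort.mp this
    have hsum : ∑ i : Fin k, (P i).ncard ≤ Fintype.card V := by
      classical
      calc ∑ i : Fin k, (P i).ncard = ∑ i : Fin k, (P i).toFinset.card := by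
            simp [Set.ncard_eq_toFinset_card']
        _ = (Finset.univ.biUnion fun i => (P i).toFinset).card := by
            refine (Finset.card_biUnion ?_).symm
            intro i _ j _ hij
            exact Set.disjoint_toFinset.mpr (hdisj hij)
        _ ≤ Fintype.card V := by
            simpa using Finset.card_le_univ (Finset.univ.biUnion fun i => (P i).toFinset)
    have hone : ∀ i, (P i).ncard = 1 := by
      intro i
      by_contra hne1
      have h1 : ∀ j : Fin k, 1 ≤ (P j).ncard := by
        intro j
        exact (Set.ncard_pos (Set.toFinite _)).mpr (hne j)
      have hlt : ∑ _j : Fin k, 1 < ∑ j : Fin k, (P j).ncard := by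
        refine Finset.sum_lt_sum (fun j _ => h1 j) ⟨i, Finset.mem_univ i, ?_⟩
        have := h1 i
        omega
      simp at hlt
      omega
    -- b ≥ 1
    have hb : 1 ≤ b := by
      have hk0 : 0 < k := lt_of_lt_of_le hn hnk
      obtain ⟨I, H', hI1, _, _, hb'⟩ :=
        hpartial T hTG hTt root hroot 1 (fun _ => P ⟨0, hk0⟩)
          (Subsingleton.pairwise) (fun _ => hconn _)
      have hIne : I.Nonempty := Finset.card_pos.mp (by omega)
      obtain ⟨j, hj⟩ := hIne
      have hcard := hb' j hj
      obtain ⟨v, hv⟩ := hne ⟨0, hk0⟩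
      have hvmem : v ∈ (blocksGraph G (P ⟨0, hk0⟩) (H' j)).verts := by
        simp [blocksGraph, hv]
      have : Nonempty (blocksGraph G (P ⟨0, hk0⟩) (H' j)).coe.ConnectedComponent :=
        ⟨(blocksGraph G (P ⟨0, hk0⟩) (H' j)).coe.connectedComponentMk ⟨v, hvmem⟩⟩
      have hpos : 0 < Nat.card (blocksGraph G (P ⟨0, hk0⟩) (H' j)).coe.ConnectedComponent :=
        Nat.card_pos
      omega
    refine ⟨fun _ => ⊥, ?_, ?_, ?_⟩
    · intro i e he
      simp at he
    · intro e
      have : {i : Fin k | e ∈ ((⊥ : G.Subgraph)).edgeSet} = ∅ := by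
        ext i; simp
      simp [this]
    · intro i
      obtain ⟨v, hv⟩ := Set.ncard_eq_one.mp (hone i)
      have hsub : Subsingleton (blocksGraph G (P i) (⊥ : G.Subgraph)).coe.ConnectedComponent := by
        constructor
        intro a b
        refine SimpleGraph.ConnectedComponent.ind₂ (fun x y => ?_) a b
        have hx : (x : V) = v := by
          have := x.2
          simp [blocksGraph, hv] at this
          exact this
        have hy : (y : V) = v := by
          have := y.2
          simp [blocksGraph, hv] at this
          exact this
        have : x = y := Subtype.ext (hx.trans hy.symm)
        rw [this]
      have hle1 : Nat.card (blocksGraph G (P i) (⊥ : G.Subgraph)).coe.ConnectedComponent ≤ 1 := by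
        rcases isEmpty_or_nonempty (blocksGraph G (P i) (⊥ : G.Subgraph)).coe.ConnectedComponent with he | hne'
        · simp [Nat.card_of_isEmpty]
        · obtain ⟨a⟩ := hne'
          haveI := hsub
          rw [Nat.card_of_subsingleton a]
      exact hle1.trans hb
end

section
/- Any n-node finite connected graph G with diameter at most D admits, for every collection of parts P_1,...,P_k, a shortcut with congestion at most √n and dilation at most 2D + √n; in particular every graph admits shortcuts of quality O(D + √n). (Such a shortcut is obtained by setting H_i = ∅ for each part with |P_i| ≤ √n and H_i = T, a breadth-first-search spanning tree of G, for each other part.) -/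
open SimpleGraph

/-- The subgraph `G[P] + H`: the union of the subgraph of `G` induced by `P` with the
subgraph `H`. -/
def partGraph {V : Type} (G : SimpleGraph V) (P : Set V) (H : G.Subgraph) : G.Subgraph :=
  (⊤ : G.Subgraph).induce P ⊔ H

/-!
Call a part large if it has more than `⌊√n⌋` vertices. The parts are disjoint, so there are
at most `n / (⌊√n⌋ + 1) < ⌊√n⌋ + 1` large parts. A large part gets all of `G` as its
shortcut, which serves as well as a BFS tree since only its diameter `D` matters; so every edge
has congestion at most `⌊√n⌋`. A small part gets nothing; a shortest path in the connected
graph `G[P]` has fewer than `|P| ≤ ⌊√n⌋` edges.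
-/

section LargeParts

variable {ι V : Type*} [Finite ι] [Finite V] {P : ι → Set V}

theorem ncard_setOf_lt_ncard_mul_succ_le (hdisj : Pairwise fun i j => Disjoint (P i) (P j))
    (m : ℕ) : {i | m < (P i).ncard}.ncard * (m + 1) ≤ Nat.card V := by
  classical
  have := Fintype.ofFinite ι
  set t := {i | m < (P i).ncard}
  calc t.ncard * (m + 1) = t.toFinset.card • (m + 1) := by
        rw [Set.ncard_eq_toFinset_card', smul_eq_mul]
    _ ≤ ∑ i ∈ t.toFinset, (P i).ncard :=
        Finset.card_nsmul_le_sum _ _ _ fun i hi => by simpa [t] using hi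
    _ = (⋃ i ∈ t, P i).ncard := by
        rw [t.toFinite.ncard_biUnion (fun i _ => Set.toFinite _) fun i _ j _ hij => hdisj hij,
          ← finsum_mem_coe_finset, Set.coe_toFinset]
    _ ≤ Nat.card V := Set.ncard_le_card _

theorem ncard_setOf_sqrt_lt_ncard_le (hdisj : Pairwise fun i j => Disjoint (P i) (P j)) :
    {i | Nat.sqrt (Nat.card V) < (P i).ncard}.ncard ≤ Nat.sqrt (Nat.card V) :=
  Nat.lt_succ_iff.mp <| Nat.lt_of_mul_lt_mul_right <|
    (ncard_setOf_lt_ncard_mul_succ_le hdisj _).trans_lt (Nat.lt_succ_sqrt _)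

end LargeParts

namespace SimpleGraph

theorem Reachable.dist_map_le {V W : Type*} {G : SimpleGraph V} {G' : SimpleGraph W}
    (f : G →g G') {u v : V} (h : G.Reachable u v) : G'.dist (f u) (f v) ≤ G.dist u v := by
  obtain ⟨p, hp⟩ := h.exists_walk_length_eq_dist
  rw [← hp, ← p.length_map f]
  exact dist_le _

theorem Reachable.dist_lt_card {V : Type*} [Finite V] {G : SimpleGraph V} {u v : V}
    (h : G.Reachable u v) : G.dist u v < Nat.card V := by
  classical
  have := Fintype.ofFinite V
  obtain ⟨p⟩ := h
  rw [Nat.card_eq_fintype_card]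
  exact (dist_le p.bypass).trans_lt p.bypass_isPath.length_lt

end SimpleGraph

section PartGraph

variable {V : Type} {G : SimpleGraph V} {P : Set V}

theorem partGraph_top : partGraph G P ⊤ = ⊤ := by
  simp [partGraph]

theorem partGraph_bot : partGraph G P ⊥ = (⊤ : G.Subgraph).induce P := by
  simp [partGraph]

theorem connected_coe_partGraph_top (hG : G.Connected) : (partGraph G P ⊤).coe.Connected := by
  rw [partGraph_top]
  exact (Iso.connected_iff Subgraph.topIso).mpr hG

theorem dist_coe_partGraph_top_le (hG : G.Connected) :
    ∀ u v, (partGraph G P ⊤).coe.dist u v ≤ G.dist u v := by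
  rw [partGraph_top]
  exact fun u v => (hG u v).dist_map_le Subgraph.topIso.symm.toHom

theorem connected_coe_partGraph_bot (hP : (G.induce P).Connected) :
    (partGraph G P ⊥).coe.Connected := by
  rwa [partGraph_bot, ← induce_eq_coe_induce_top]

theorem dist_coe_partGraph_bot_lt [Finite V] (hP : (G.induce P).Connected) :
    ∀ u v, (partGraph G P ⊥).coe.dist u v < P.ncard := by
  rw [partGraph_bot, ← induce_eq_coe_induce_top, ← Nat.card_coe_set_eq]
  exact fun u v => (hP u v).dist_lt_card

end PartGraph

noncomputable def largePartShortcut {ι V : Type} (G : SimpleGraph V) (P : ι → Set V) (s : ℕ)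
    (i : ι) : G.Subgraph :=
  open Classical in if s < (P i).ncard then ⊤ else ⊥

section LargePartShortcut

variable {ι V : Type} {G : SimpleGraph V} {P : ι → Set V} {s : ℕ} {i : ι}

theorem largePartShortcut_of_lt (h : s < (P i).ncard) : largePartShortcut G P s i = ⊤ := by
  simp [largePartShortcut, h]

theorem largePartShortcut_of_le (h : (P i).ncard ≤ s) : largePartShortcut G P s i = ⊥ := by
  simp [largePartShortcut, h.not_gt]

theorem ncard_setOf_mem_edgeSet_largePartShortcut_le [Finite ι] (e : Sym2 V) :
    {i | e ∈ (largePartShortcut G P s i).edgeSet}.ncard ≤ {i | s < (P i).ncard}.ncard := by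
  refine Set.ncard_le_ncard (fun i hi => ?_)
  by_contra h
  simp [largePartShortcut_of_le (not_lt.mp h)] at hi

end LargePartShortcut

/-- **Observation.** Any `n`-node finite connected graph `G` with diameter at most `D`
admits, for every collection of parts `P 0, ..., P (k-1)`, a shortcut with congestion at
most `√n` and dilation at most `2D + √n`; in particular every graph admits shortcuts of
quality `O(D + √n)`. -/
theorem shortcuts_general_graphs
    {V : Type} [Fintype V] (G : SimpleGraph V) (hG : G.Connected)
    (D : ℕ) (hD : ∀ u v : V, G.dist u v ≤ D)
    (k : ℕ) (P : Fin k → Set V)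
    (hdisj : Pairwise fun i j => Disjoint (P i) (P j))
    (hconn : ∀ i, (G.induce (P i)).Connected) :
    ∃ H : Fin k → G.Subgraph,
      (∀ e : Sym2 V,
        ({i : Fin k | e ∈ (H i).edgeSet}.ncard : ℝ) ≤ Real.sqrt (Fintype.card V)) ∧
      (∀ i, (partGraph G (P i) (H i)).coe.Connected ∧
        ∀ u v, ((partGraph G (P i) (H i)).coe.dist u v : ℝ) ≤
          2 * D + Real.sqrt (Fintype.card V)) := by
  set s := Nat.sqrt (Nat.card V)
  have hs : (s : ℝ) ≤ √(Fintype.card V) := by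
    rw [← Nat.card_eq_fintype_card]; exact Real.nat_sqrt_le_real_sqrt
  refine ⟨largePartShortcut G P s, fun e => ?_, fun i => ?_⟩
  · calc ({i | e ∈ (largePartShortcut G P s i).edgeSet}.ncard : ℝ)
        ≤ {i | s < (P i).ncard}.ncard :=
          Nat.cast_le.mpr (ncard_setOf_mem_edgeSet_largePartShortcut_le e)
      _ ≤ s := Nat.cast_le.mpr (ncard_setOf_sqrt_lt_ncard_le hdisj)
      _ ≤ √(Fintype.card V) := hs
  rcases lt_or_ge s (P i).ncard with hlarge | hsmall
  · rw [largePartShortcut_of_lt hlarge]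
    refine ⟨connected_coe_partGraph_top hG, fun u v => ?_⟩
    have : (_ : ℝ) ≤ D := Nat.cast_le.mpr ((dist_coe_partGraph_top_le hG u v).trans (hD _ _))
    linarith [Real.sqrt_nonneg (Fintype.card V)]
  · rw [largePartShortcut_of_le hsmall]
    refine ⟨connected_coe_partGraph_bot (hconn i), fun u v => ?_⟩
    have : (_ : ℝ) ≤ s :=
      Nat.cast_le.mpr ((dist_coe_partGraph_bot_lt (hconn i) u v).le.trans hsmall)
    linarith [(Nat.cast_nonneg D : (0 : ℝ) ≤ D)]
end

section
/- Consider the (δ-1)D+1 rows P_1,...,P_{(δ-1)D+1} of G(δ,k) as a collection of parts, where D = kδ. Every partial shortcut for these parts (i.e., any assignment of shortcut subgraphs to at least half of the parts) has either dilation at least (δ-1)D/2 or congestion at least (δ-1)D/4; in particular, its quality is at least (δ-1)D/4. -/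
open SimpleGraph

/-- Vertex type of the lower-bound graph `G(δ,k)`: the top path has `(δ-1)k+1` vertices
`p`, and there is a `((δ-1)D+1) × ((δ-1)D+1)` grid of vertices `v_{i,j}`, where `D = kδ`. -/
abbrev GDKVert (δ k : ℕ) : Type :=
  Fin ((δ - 1) * k + 1) ⊕ (Fin ((δ - 1) * (k * δ) + 1) × Fin ((δ - 1) * (k * δ) + 1))

/-- The lower-bound graph `G(δ,k)` (indices zero-based, `D = kδ`): the `p`-vertices form a
path (the top path); each row `v_{i,·}` forms a path; each column `v_{·,c}` with `D ∣ c`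
forms a path; and `v_{r,c}` is adjacent to `p_q` whenever `D ∣ r`, `D ∣ c` and
`q·D = c·k` (i.e. `q = (c/D)·k`). -/
def GDK (δ k : ℕ) : SimpleGraph (GDKVert δ k) :=
  SimpleGraph.fromRel (fun x y =>
    match x, y with
    | Sum.inl a, Sum.inl b => (b : ℕ) = (a : ℕ) + 1
    | Sum.inr ⟨i, j⟩, Sum.inr ⟨i', j'⟩ =>
        (i = i' ∧ (j' : ℕ) = (j : ℕ) + 1) ∨
        (j = j' ∧ (k * δ) ∣ (j : ℕ) ∧ (i' : ℕ) = (i : ℕ) + 1)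
    | Sum.inr ⟨i, j⟩, Sum.inl p =>
        (k * δ) ∣ (i : ℕ) ∧ (k * δ) ∣ (j : ℕ) ∧ (p : ℕ) * (k * δ) = (j : ℕ) * k
    | Sum.inl _, Sum.inr _ => False)

/-- The `i`-th row of `G(δ,k)`, viewed as a part: the set of vertices `v_{i,j}` for all
`j`. -/
def gdkRow (δ k : ℕ) (i : Fin ((δ - 1) * (k * δ) + 1)) : Set (GDKVert δ k) :=
  {x | ∃ j, x = Sum.inr (i, j)}

/-! Give `p_a` the abscissa `aδ` and `v_{i,j}` the abscissa `j` (indices from 0), so that `p_a` sits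
above column `aδ`. Grid edges change the abscissa by at most `1` and top-path edges by `δ`. The two
ends of a row are `n = (δ-1)D` apart, so a path of length `≤ d` joining them uses at least
`(n - d)/(δ-1)` top edges, and these must belong to the row's shortcut. There are only `(δ-1)k` top
edges, each in at most `c` shortcuts; summing over the `≥ (n+1)/2` selected rows gives
`|I|(n - d) ≤ (δ-1)²k c ≤ n c`, which is impossible when `2d < n` and `4c < n`. -/

open Finset

theorem List.Nodup.countP_le_card {α : Type*} {l : List α} (hl : l.Nodup) (p : α → Prop)
    [DecidablePred p] {S : Finset α} (hS : ∀ x ∈ l, p x → x ∈ S) : l.countP p ≤ #S := by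
  classical
  rw [List.countP_eq_length_filter, ← List.toFinset_card_of_nodup (hl.filter _)]
  exact card_le_card fun x hx => by
    obtain ⟨hxl, hpx⟩ := List.mem_filter.mp (List.mem_toFinset.mp hx)
    exact hS x hxl (of_decide_eq_true hpx)

theorem Finset.sum_card_filter_le_card_mul {ι β : Type*} (I : Finset ι) (S : Finset β)
    (r : ι → β → Prop) [∀ i b, Decidable (r i b)] {c : ℕ}
    (hc : ∀ b ∈ S, #{i ∈ I | r i b} ≤ c) : ∑ i ∈ I, #{b ∈ S | r i b} ≤ #S * c := by
  rw [← smul_eq_mul]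
  exact (sum_card_bipartiteAbove_eq_sum_card_bipartiteBelow (r := r)).trans_le
    (sum_le_card_nsmul S _ c hc)

namespace SimpleGraph

variable {V : Type*} {G : SimpleGraph V}

theorem Walk.le_add_length_add_mul_countP (φ : V → ℕ) (p : Sym2 V → Prop) [DecidablePred p]
    (s : ℕ) (hstep : ∀ u v, G.Adj u v → φ v ≤ φ u + 1 + if p s(u, v) then s else 0)
    {u v : V} (w : G.Walk u v) : φ v ≤ φ u + w.length + s * w.edges.countP p := by
  induction w with
  | nil => simp
  | @cons x y z h w ih =>
    have hs := hstep _ _ h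
    rw [edges_cons, List.countP_cons, length_cons, mul_add]
    by_cases hp : p s(x, y) <;>
      simp only [hp, if_true, if_false, decide_true, decide_false] at hs ⊢ <;> omega

theorem Subgraph.exists_isPath_length_le_of_dist_le {G' : G.Subgraph} {d : ℕ}
    (hconn : G'.coe.Connected) (hdist : ∀ u v, G'.coe.dist u v ≤ d) {u v : V}
    (hu : u ∈ G'.verts) (hv : v ∈ G'.verts) :
    ∃ w : G.Walk u v, w.IsPath ∧ w.length ≤ d ∧ ∀ e ∈ w.edges, e ∈ G'.edgeSet := by
  obtain ⟨p, hp, hlen⟩ := hconn.exists_path_of_dist ⟨u, hu⟩ ⟨v, hv⟩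
  have hlen' : (p.map G'.hom).length ≤ d := by
    rw [Walk.length_map, hlen]
    exact hdist _ _
  have hedges : ∀ e ∈ (p.map G'.hom).edges, e ∈ G'.edgeSet := by
    intro e he
    rw [Walk.edges_map, List.mem_map] at he
    obtain ⟨e', he', rfl⟩ := he
    simpa using p.edges_subset_edgeSet he'
  exact ⟨p.map G'.hom, hp.map Subgraph.hom_injective, hlen', hedges⟩

end SimpleGraph

theorem Nat.le_two_mul_or_le_four_mul_of_mul_le {n q d c : ℕ} (hq : n + 1 ≤ 2 * q)
    (h : q * n ≤ q * d + n * c) : n ≤ 2 * d ∨ n ≤ 4 * c := by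
  by_contra! ⟨hd, hc⟩
  nlinarith [Nat.mul_le_mul_right (n + 1) hq, Nat.mul_le_mul_left q hd,
    Nat.mul_le_mul_left n hc]

def gdkTopEdges (δ k : ℕ) : Finset (Sym2 (GDKVert δ k)) :=
  univ.image fun a : Fin ((δ - 1) * k) => s(Sum.inl a.castSucc, Sum.inl a.succ)

def gdkAbscissa (δ k : ℕ) : GDKVert δ k → ℕ
  | Sum.inl a => a * δ
  | Sum.inr x => x.2

section GDK

variable {δ k : ℕ}

theorem card_gdkTopEdges_le : #(gdkTopEdges δ k) ≤ (δ - 1) * k :=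
  card_image_le.trans (card_fin _).le

theorem isLeft_of_mem_gdkTopEdges {e : Sym2 (GDKVert δ k)} (he : e ∈ gdkTopEdges δ k)
    {x : GDKVert δ k} (hx : x ∈ e) : x.isLeft := by
  obtain ⟨a, -, rfl⟩ := mem_image.mp he
  rcases Sym2.mem_iff.mp hx with rfl | rfl <;> rfl

theorem mk_inl_mem_gdkTopEdges {a b : Fin ((δ - 1) * k + 1)}
    (h : (GDK δ k).Adj (Sum.inl a) (Sum.inl b)) : s(Sum.inl a, Sum.inl b) ∈ gdkTopEdges δ k := by
  rw [GDK, fromRel_adj] at h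
  rcases h.2 with hab | hba
  · exact mem_image.mpr ⟨⟨a, by omega⟩, mem_univ _, by congr 2; ext; simp [hab]⟩
  · refine mem_image.mpr ⟨⟨b, by omega⟩, mem_univ _, ?_⟩
    rw [Sym2.eq_swap]
    congr 2; ext; simp [hba]

theorem val_mul_eq_of_dvd_of_mul_eq {p : Fin ((δ - 1) * k + 1)} {j : ℕ} (hj : k * δ ∣ j)
    (h : (p : ℕ) * (k * δ) = j * k) : (p : ℕ) * δ = j := by
  rcases k.eq_zero_or_pos with rfl | hk
  · have hp : (p : ℕ) = 0 := by have := p.isLt; omega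
    rw [zero_mul, zero_dvd_iff] at hj
    rw [hp, hj, zero_mul]
  · exact Nat.eq_of_mul_eq_mul_right hk (by rw [← h]; ring)

theorem gdkAbscissa_le_of_adj {u v : GDKVert δ k} (h : (GDK δ k).Adj u v) :
    gdkAbscissa δ k v ≤
      gdkAbscissa δ k u + 1 + if s(u, v) ∈ gdkTopEdges δ k then δ - 1 else 0 := by
  rcases u with a | ⟨i, j⟩ <;> rcases v with b | ⟨i', j'⟩
  · rw [if_pos (mk_inl_mem_gdkTopEdges h)]
    rw [GDK, fromRel_adj] at h
    have hb : (b : ℕ) ≤ a + 1 := by omega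
    calc (b : ℕ) * δ ≤ (a + 1) * δ := Nat.mul_le_mul_right δ hb
      _ ≤ a * δ + 1 + (δ - 1) := by rw [add_one_mul]; omega
  all_goals
    refine le_add_right ?_
    rw [GDK, fromRel_adj] at h
    simp only [gdkAbscissa]
  · obtain ⟨-, hj, hp⟩ := h.2.resolve_left not_false
    have := val_mul_eq_of_dvd_of_mul_eq hj hp
    omega
  · obtain ⟨-, hj, hp⟩ := h.2.resolve_right not_false
    have := val_mul_eq_of_dvd_of_mul_eq hj hp
    omega
  · rcases h.2 with (⟨-, h'⟩ | ⟨h', -⟩) | (⟨-, h'⟩ | ⟨h', -⟩) <;> simp only [h'] <;> omega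

theorem mem_edgeSet_of_mem_partGraph_of_mem_gdkTopEdges {i : Fin ((δ - 1) * (k * δ) + 1)}
    {H : (GDK δ k).Subgraph} {e : Sym2 (GDKVert δ k)}
    (he : e ∈ (partGraph (GDK δ k) (gdkRow δ k i) H).edgeSet) (htop : e ∈ gdkTopEdges δ k) :
    e ∈ H.edgeSet := by
  induction e using Sym2.ind with
  | _ u v =>
    rcases he with ⟨⟨j, rfl⟩, -, -⟩ | he
    · simpa using isLeft_of_mem_gdkTopEdges htop (Sym2.mem_mk_left _ _)
    · exact he

open Classical in
theorem le_add_mul_card_gdkTopEdges_of_dist_le {i : Fin ((δ - 1) * (k * δ) + 1)}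
    {H : (GDK δ k).Subgraph} {d : ℕ}
    (hconn : (partGraph (GDK δ k) (gdkRow δ k i) H).coe.Connected)
    (hdist : ∀ u v, (partGraph (GDK δ k) (gdkRow δ k i) H).coe.dist u v ≤ d) :
    (δ - 1) * (k * δ) ≤ d + (δ - 1) * #{e ∈ gdkTopEdges δ k | e ∈ H.edgeSet} := by
  obtain ⟨w, hpath, hlen, hedges⟩ := Subgraph.exists_isPath_length_le_of_dist_le hconn hdist
    (u := Sum.inr (i, 0)) (v := Sum.inr (i, Fin.last _)) (Or.inl ⟨_, rfl⟩) (Or.inl ⟨_, rfl⟩)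
  have htop : w.edges.countP (· ∈ gdkTopEdges δ k) ≤ #{e ∈ gdkTopEdges δ k | e ∈ H.edgeSet} :=
    hpath.edges_nodup.countP_le_card _ fun e he htop =>
      mem_filter.mpr ⟨htop, mem_edgeSet_of_mem_partGraph_of_mem_gdkTopEdges (hedges e he) htop⟩
  have hwidth := w.le_add_length_add_mul_countP (gdkAbscissa δ k) (· ∈ gdkTopEdges δ k) (δ - 1)
    fun _ _ => gdkAbscissa_le_of_adj
  simp only [gdkAbscissa, Fin.val_last, Fin.val_zero, zero_add] at hwidth
  calc (δ - 1) * (k * δ) ≤ w.length + (δ - 1) * w.edges.countP (· ∈ gdkTopEdges δ k) := hwidth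
    _ ≤ d + (δ - 1) * #{e ∈ gdkTopEdges δ k | e ∈ H.edgeSet} := by gcongr

end GDK

theorem gdk_partial_shortcut_lower_bound_general (δ k : ℕ)
    (I : Finset (Fin ((δ - 1) * (k * δ) + 1)))
    (H : Fin ((δ - 1) * (k * δ) + 1) → (GDK δ k).Subgraph) (c d : ℕ)
    (hhalf : (δ - 1) * (k * δ) + 1 ≤ 2 * I.card)
    (hdil : ∀ i ∈ I, (partGraph (GDK δ k) (gdkRow δ k i) (H i)).coe.Connected ∧
      ∀ u v, (partGraph (GDK δ k) (gdkRow δ k i) (H i)).coe.dist u v ≤ d)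
    (hcong : ∀ e : Sym2 (GDKVert δ k),
      {i | i ∈ I ∧ e ∈ (H i).edgeSet}.ncard ≤ c) :
    ((δ - 1) * (k * δ) ≤ 2 * d ∨ (δ - 1) * (k * δ) ≤ 4 * c) ∧
    (δ - 1) * (k * δ) ≤ 4 * (c + d) := by
  classical
  let t i := #{e ∈ gdkTopEdges δ k | e ∈ (H i).edgeSet}
  have hrows : ∀ i ∈ I, (δ - 1) * (k * δ) ≤ d + (δ - 1) * t i := fun i hi =>
    le_add_mul_card_gdkTopEdges_of_dist_le (hdil i hi).1 (hdil i hi).2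
  have hload : ∑ i ∈ I, t i ≤ (δ - 1) * k * c := by
    refine (sum_card_filter_le_card_mul I _ (fun i e => e ∈ (H i).edgeSet) fun e _ => ?_).trans
      (Nat.mul_le_mul_right c card_gdkTopEdges_le)
    rw [← Set.ncard_coe_finset, coe_filter]
    exact hcong e
  have htotal : #I * ((δ - 1) * (k * δ)) ≤ #I * d + (δ - 1) * (k * δ) * c := calc
    #I * ((δ - 1) * (k * δ)) ≤ ∑ i ∈ I, (d + (δ - 1) * t i) := by
      simpa using card_nsmul_le_sum I _ _ hrows
    _ = #I * d + (δ - 1) * ∑ i ∈ I, t i := by rw [sum_add_distrib, sum_const, smul_eq_mul, mul_sum]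
    _ ≤ #I * d + (δ - 1) * ((δ - 1) * k * c) := by gcongr
    _ = #I * d + (δ - 1) * ((δ - 1) * k) * c := by ring
    _ ≤ #I * d + (δ - 1) * (k * δ) * c := by
      gcongr #I * d + (δ - 1) * ?_ * c
      rw [mul_comm k]
      exact Nat.mul_le_mul_right k (Nat.sub_le δ 1)
  have hmain := Nat.le_two_mul_or_le_four_mul_of_mul_le hhalf htotal
  exact ⟨hmain, by omega⟩

/-- **Claim.** Consider the `(δ-1)D+1` rows of `G(δ,k)` as a collection of parts, where
`D = kδ`. Every partial shortcut for these parts (any assignment of shortcut subgraphs with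
congestion `c` and dilation `d` to at least half of the parts) has either dilation at least
`(δ-1)D/2` or congestion at least `(δ-1)D/4`; in particular, its quality `c + d` is at
least `(δ-1)D/4`. -/
theorem gdk_partial_shortcut_lower_bound (δ k : ℕ) (hδ : 3 ≤ δ) (hk : 2 ≤ k)
    (I : Finset (Fin ((δ - 1) * (k * δ) + 1)))
    (H : Fin ((δ - 1) * (k * δ) + 1) → (GDK δ k).Subgraph) (c d : ℕ)
    (hhalf : (δ - 1) * (k * δ) + 1 ≤ 2 * I.card)
    (hdil : ∀ i ∈ I, (partGraph (GDK δ k) (gdkRow δ k i) (H i)).coe.Connected ∧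
      ∀ u v, (partGraph (GDK δ k) (gdkRow δ k i) (H i)).coe.dist u v ≤ d)
    (hcong : ∀ e : Sym2 (GDKVert δ k),
      {i | i ∈ I ∧ e ∈ (H i).edgeSet}.ncard ≤ c) :
    ((δ - 1) * (k * δ) ≤ 2 * d ∨ (δ - 1) * (k * δ) ≤ 4 * c) ∧
    (δ - 1) * (k * δ) ≤ 4 * (c + d) :=
  gdk_partial_shortcut_lower_bound_general δ k I H c d hhalf hdil hcong
end
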